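/- arXiv:2202.13075 — 4 statements merged into one kernel-verified Lean document; each statement's English description precedes it below -/
import Mathlib

section
/- Let η(z) = η_∞ + (η_0 − η_∞)(1 + λ z)^{(p-2)/2} with η_0 > η_∞ ≥ 0, λ > 0 and p ∈ (1,2). If η_∞ ≠ 0, then there exists a constant C_1 > 0 such that for all symmetric matrices K, L: |η(|K|²)K − η(|L|²)L| ≤ C_1 |K − L|. -/
noncomputable def frob {n : ℕ} (B : Matrix (Fin n) (Fin n) ℝ) : ℝ :=
  Real.sqrt (∑ i, ∑ j, (B i j) ^ 2)

section aux

variable {E : Type*} [NormedAddCommGroup E] [NormedSpace ℝ E]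

lemma carreau_g_le_one (p lam z : ℝ) (hp2 : p < 2) (hlam : 0 < lam) (hz : 0 ≤ z) :
    (1 + lam * z) ^ ((p - 2) / 2) ≤ 1 := by
  apply Real.rpow_le_one_of_one_le_of_nonpos
  · nlinarith
  · linarith

lemma carreau_half (p lam : ℝ) (hp1 : 1 < p) (hp2 : p < 2) (hlam : 0 < lam)
    (x y : E) (hba : ‖y‖ ≤ ‖x‖) :
    ‖(1 + lam * ‖x‖ ^ 2) ^ ((p - 2) / 2) • x
      - (1 + lam * ‖y‖ ^ 2) ^ ((p - 2) / 2) • y‖ ≤ 3 * ‖x - y‖ := by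
  set a := ‖x‖ with ha
  set b := ‖y‖ with hb
  have hb0 : 0 ≤ b := norm_nonneg y
  have ha0 : 0 ≤ a := norm_nonneg x
  set ga := (1 + lam * a ^ 2) ^ ((p - 2) / 2) with hga
  set gb := (1 + lam * b ^ 2) ^ ((p - 2) / 2) with hgb
  have hga1 : ga ≤ 1 := carreau_g_le_one p lam _ hp2 hlam (by positivity)
  have hgapos : 0 < ga := Real.rpow_pos_of_pos (by nlinarith) _
  have hdecomp : ga • x - gb • y = ga • (x - y) + (ga - gb) • y := by
    rw [smul_sub, sub_smul]; abel
  rw [hdecomp]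
  have habs : |a - b| ≤ ‖x - y‖ := abs_norm_sub_norm_le x y
  have key : |ga - gb| * b ≤ (2 - p) * ‖x - y‖ := by
    rcases eq_or_lt_of_le hb0 with h0 | hbpos
    · rw [← h0, mul_zero]
      have := norm_nonneg (x - y); nlinarith
    · -- MVT on G(t) = (1 + lam t^2)^((p-2)/2) on [b, a]
      set G : ℝ → ℝ := fun t => (1 + lam * t ^ 2) ^ ((p - 2) / 2) with hG
      set G' : ℝ → ℝ := fun t => (lam * (2 * t)) * ((p - 2) / 2) * (1 + lam * t ^ 2) ^ ((p - 2) / 2 - 1) with hG'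
      have hderiv : ∀ t ∈ Set.Icc b a, HasDerivWithinAt G (G' t) (Set.Icc b a) t := by
        intro t ht
        have h1 : HasDerivAt (fun t : ℝ => 1 + lam * t ^ 2) (lam * (2 * t)) t := by
          have := ((hasDerivAt_pow 2 t).const_mul lam).const_add 1
          simpa using this
        have hne : (1 + lam * t ^ 2) ≠ 0 := by nlinarith
        exact ((h1.rpow_const (Or.inl hne))).hasDerivWithinAt
      have hbound : ∀ t ∈ Set.Icc b a, ‖G' t‖ ≤ (2 - p) / b := by
        intro t ht
        obtain ⟨htb, hta⟩ := ht
        have ht0 : 0 < t := lt_of_lt_of_le hbpos htb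
        have hbase : (1 : ℝ) ≤ 1 + lam * t ^ 2 := by nlinarith
        have hP : (1 + lam * t ^ 2) ^ ((p - 2) / 2 - 1) ≤ (lam * t ^ 2)⁻¹ := by
          calc (1 + lam * t ^ 2) ^ ((p - 2) / 2 - 1)
              ≤ (1 + lam * t ^ 2) ^ (-1 : ℝ) :=
                Real.rpow_le_rpow_of_exponent_le hbase (by linarith)
            _ = (1 + lam * t ^ 2)⁻¹ := Real.rpow_neg_one _
            _ ≤ (lam * t ^ 2)⁻¹ := by
                apply inv_anti₀ (by positivity) (by linarith)
        have hPpos : 0 < (1 + lam * t ^ 2) ^ ((p - 2) / 2 - 1) :=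
          Real.rpow_pos_of_pos (by nlinarith) _
        rw [Real.norm_eq_abs, hG']
        have : |lam * (2 * t) * ((p - 2) / 2) * (1 + lam * t ^ 2) ^ ((p - 2) / 2 - 1)|
            = lam * t * (2 - p) * (1 + lam * t ^ 2) ^ ((p - 2) / 2 - 1) := by
          rw [abs_mul, abs_mul]
          rw [abs_of_pos (by positivity : (0:ℝ) < lam * (2 * t)),
            abs_of_neg (by linarith : (p - 2) / 2 < 0),
            abs_of_pos hPpos]
          ring
        rw [this]
        have h1 : lam * t * (2 - p) * (1 + lam * t ^ 2) ^ ((p - 2) / 2 - 1)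
            ≤ lam * t * (2 - p) * (lam * t ^ 2)⁻¹ := by
          apply mul_le_mul_of_nonneg_left hP (by nlinarith)
        have h2 : lam * t * (2 - p) * (lam * t ^ 2)⁻¹ = (2 - p) / t := by
          field_simp
        have h3 : (2 - p) / t ≤ (2 - p) / b :=
          div_le_div_of_nonneg_left (by linarith) hbpos htb
        linarith
      have hmvt := norm_image_sub_le_of_norm_deriv_le_segment' hderiv
        (fun t ht => hbound t (Set.mem_Icc_of_Ico ht)) a (Set.right_mem_Icc.mpr hba)
      have hGab : |G a - G b| ≤ (2 - p) / b * |a - b| := by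
        rw [abs_of_nonneg (by linarith : (0:ℝ) ≤ a - b)]
        simpa [Real.norm_eq_abs] using hmvt
      have : |ga - gb| = |G a - G b| := by rw [hG]
      rw [this]
      calc |G a - G b| * b ≤ ((2 - p) / b * |a - b|) * b := by
            apply mul_le_mul_of_nonneg_right hGab hb0
        _ = (2 - p) * |a - b| := by field_simp
        _ ≤ (2 - p) * ‖x - y‖ := by
            apply mul_le_mul_of_nonneg_left habs (by linarith)
  calc ‖ga • (x - y) + (ga - gb) • y‖
      ≤ ‖ga • (x - y)‖ + ‖(ga - gb) • y‖ := norm_add_le _ _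
    _ = ga * ‖x - y‖ + |ga - gb| * b := by
        rw [norm_smul, norm_smul, Real.norm_eq_abs, Real.norm_eq_abs,
          abs_of_pos hgapos]
    _ ≤ 1 * ‖x - y‖ + (2 - p) * ‖x - y‖ := by
        have := mul_le_mul_of_nonneg_right hga1 (norm_nonneg (x - y))
        linarith [key]
    _ ≤ 3 * ‖x - y‖ := by nlinarith [norm_nonneg (x - y), hp1]

lemma carreau_key (p lam : ℝ) (hp1 : 1 < p) (hp2 : p < 2) (hlam : 0 < lam)
    (x y : E) :
    ‖(1 + lam * ‖x‖ ^ 2) ^ ((p - 2) / 2) • x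
      - (1 + lam * ‖y‖ ^ 2) ^ ((p - 2) / 2) • y‖ ≤ 3 * ‖x - y‖ := by
  rcases le_total ‖y‖ ‖x‖ with h | h
  · exact carreau_half p lam hp1 hp2 hlam x y h
  · rw [norm_sub_rev, norm_sub_rev x y]
    exact carreau_half p lam hp1 hp2 hlam y x h

end aux

noncomputable def toE (B : Matrix (Fin 2) (Fin 2) ℝ) : EuclideanSpace ℝ (Fin 2 × Fin 2) :=
  WithLp.toLp 2 (fun q : Fin 2 × Fin 2 => B q.1 q.2)

lemma frob_eq_norm (B : Matrix (Fin 2) (Fin 2) ℝ) : frob B = ‖toE B‖ := by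
  rw [EuclideanSpace.norm_eq]
  simp [frob, toE, Fintype.sum_prod_type, Real.norm_eq_abs, sq_abs]

lemma toE_sub (X Y : Matrix (Fin 2) (Fin 2) ℝ) : toE (X - Y) = toE X - toE Y := rfl

lemma toE_smul (c : ℝ) (X : Matrix (Fin 2) (Fin 2) ℝ) : toE (c • X) = c • toE X := rfl

/-- Lipschitz continuity of the Carreau stress map when `η_∞ ≠ 0`. -/
theorem carreau_lipschitz (p η₀ ηinf lam : ℝ) (hp1 : 1 < p) (hp2 : p < 2)
    (hη : ηinf < η₀) (hηinf : 0 ≤ ηinf) (hne : ηinf ≠ 0) (hlam : 0 < lam)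
    (η : ℝ → ℝ) (hηdef : ∀ z, η z = ηinf + (η₀ - ηinf) * (1 + lam * z) ^ ((p - 2) / 2)) :
    ∃ C₁ > 0, ∀ K L : Matrix (Fin 2) (Fin 2) ℝ, K.IsSymm → L.IsSymm →
      frob (η (frob K ^ 2) • K - η (frob L ^ 2) • L) ≤ C₁ * frob (K - L) := by
  set c := η₀ - ηinf with hc
  have hcpos : 0 < c := by linarith
  refine ⟨ηinf + 3 * c, by positivity, ?_⟩
  intro K L _ _
  set x := toE K with hx
  set y := toE L with hy
  have hKL : frob (K - L) = ‖x - y‖ := by rw [frob_eq_norm, toE_sub]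
  have hfK : frob K = ‖x‖ := frob_eq_norm K
  have hfL : frob L = ‖y‖ := frob_eq_norm L
  set ga := (1 + lam * ‖x‖ ^ 2) ^ ((p - 2) / 2) with hga
  set gb := (1 + lam * ‖y‖ ^ 2) ^ ((p - 2) / 2) with hgb
  have hmain : frob (η (frob K ^ 2) • K - η (frob L ^ 2) • L)
      = ‖(ηinf + c * ga) • x - (ηinf + c * gb) • y‖ := by
    rw [frob_eq_norm, toE_sub, toE_smul, toE_smul, ← hx, ← hy,
      hηdef, hηdef, hfK, hfL, ← hga, ← hgb]
  rw [hmain, hKL]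
  have hdecomp : (ηinf + c * ga) • x - (ηinf + c * gb) • y
      = ηinf • (x - y) + c • (ga • x - gb • y) := by
    rw [smul_sub, smul_sub, smul_smul, smul_smul, add_smul, add_smul]; abel
  rw [hdecomp]
  have hkey := carreau_key p lam hp1 hp2 hlam x y
  rw [← hga, ← hgb] at hkey
  calc ‖ηinf • (x - y) + c • (ga • x - gb • y)‖
      ≤ ‖ηinf • (x - y)‖ + ‖c • (ga • x - gb • y)‖ := norm_add_le _ _
    _ = ηinf * ‖x - y‖ + c * ‖ga • x - gb • y‖ := by
        rw [norm_smul, norm_smul, Real.norm_eq_abs, Real.norm_eq_abs,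
          abs_of_nonneg hηinf, abs_of_pos hcpos]
    _ ≤ ηinf * ‖x - y‖ + c * (3 * ‖x - y‖) := by
        have := mul_le_mul_of_nonneg_left hkey (le_of_lt hcpos)
        linarith
    _ = (ηinf + 3 * c) * ‖x - y‖ := by ring
end

section
/- Let η(z) = η_∞ + (η_0 − η_∞)(1 + λ z)^{(p-2)/2} with η_0 > η_∞ ≥ 0, λ > 0 and p ∈ (1,2). Then there exists C_2 > 0 such that for all symmetric matrices K, L: Σ_{i,j} (η(|K|²)K_{ij} − η(|L|²)L_{ij})(K_{ij} − L_{ij}) ≥ (η_∞ + C_2 (1 + |K| + |L|)^{p-2}) |K − L|². -/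
private lemma aux_deriv (p lam : ℝ) (hlam : 0 < lam) (r : ℝ) :
    HasDerivAt (fun r : ℝ => r * (1 + lam * r ^ 2) ^ ((p - 2) / 2))
      ((1 + lam * r ^ 2) ^ ((p - 2) / 2 - 1) * (1 + (p - 1) * lam * r ^ 2)) r := by
  have hx : (0:ℝ) < 1 + lam * r ^ 2 := by nlinarith [sq_nonneg r]
  have h1 : HasDerivAt (fun r : ℝ => 1 + lam * r ^ 2) (lam * (2 * r)) r := by
    simpa using ((hasDerivAt_pow 2 r).const_mul lam).const_add 1
  have h2 := (h1.rpow_const (p := (p - 2) / 2) (Or.inl hx.ne'))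
  have h3 := (hasDerivAt_id r).mul h2
  refine h3.congr_deriv ?_
  simp only [id_eq]
  have hexp : (1 + lam * r ^ 2) ^ ((p - 2) / 2) =
      (1 + lam * r ^ 2) ^ ((p - 2) / 2 - 1) * (1 + lam * r ^ 2) := by
    rw [← Real.rpow_add_one hx.ne' ((p - 2) / 2 - 1)]; ring_nf
  rw [hexp]; ring

private lemma aux_F_lb (p lam : ℝ) (hp2 : p < 2) (hlam : 0 < lam) (r s t : ℝ)
    (hs : 0 ≤ s) (ht : 0 ≤ t) (hr0 : 0 ≤ r) (hr : r ≤ s + t) :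
    (max 1 lam) ^ ((p - 2) / 2) * (1 + s + t) ^ (p - 2) ≤
      (1 + lam * r ^ 2) ^ ((p - 2) / 2) := by
  set M := max 1 lam with hM
  have hM1 : (1:ℝ) ≤ M := le_max_left _ _
  have hMlam : lam ≤ M := le_max_right _ _
  have hx : (0:ℝ) < 1 + lam * r ^ 2 := by nlinarith [sq_nonneg r]
  have hy : (0:ℝ) < 1 + s + t := by linarith
  have hq : (p - 2) / 2 ≤ 0 := by linarith
  have hrsq : r ^ 2 ≤ (s + t) ^ 2 := by nlinarith
  have step1 : 1 + lam * r ^ 2 ≤ M * (1 + s + t) ^ 2 := by nlinarith [sq_nonneg (s + t)]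
  have step2 : (M * (1 + s + t) ^ 2) ^ ((p - 2) / 2) ≤ (1 + lam * r ^ 2) ^ ((p - 2) / 2) :=
    Real.rpow_le_rpow_of_nonpos hx step1 hq
  have step3 : (M * (1 + s + t) ^ 2) ^ ((p - 2) / 2) =
      M ^ ((p - 2) / 2) * (1 + s + t) ^ (p - 2) := by
    rw [Real.mul_rpow (by linarith : (0:ℝ) ≤ M) (by positivity)]
    congr 1
    rw [← Real.rpow_natCast (1 + s + t) 2, ← Real.rpow_mul hy.le]
    norm_num
    congr 1
    ring
  linarith [step2, step3.ge.trans step2]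

private lemma aux_g_lb (p lam : ℝ) (hp1 : 1 < p) (hp2 : p < 2) (hlam : 0 < lam)
    (s t : ℝ) (hs : 0 ≤ s) (ht : 0 ≤ t) (hts : t ≤ s) :
    (p - 1) * (max 1 lam) ^ ((p - 2) / 2) * (1 + s + t) ^ (p - 2) * (s - t) ≤
      s * (1 + lam * s ^ 2) ^ ((p - 2) / 2) - t * (1 + lam * t ^ 2) ^ ((p - 2) / 2) := by
  rcases eq_or_lt_of_le hts with rfl | hlt
  · norm_num
  · set g : ℝ → ℝ := fun r => r * (1 + lam * r ^ 2) ^ ((p - 2) / 2) with hg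
    set g' : ℝ → ℝ := fun r => (1 + lam * r ^ 2) ^ ((p - 2) / 2 - 1) * (1 + (p - 1) * lam * r ^ 2)
      with hg'
    have hder : ∀ r, HasDerivAt g (g' r) r := fun r => aux_deriv p lam hlam r
    obtain ⟨r, hrmem, hrslope⟩ := exists_hasDerivAt_eq_slope g g' hlt
      (fun x _ => (hder x).continuousAt.continuousWithinAt) (fun x _ => hder x)
    have hr0 : 0 ≤ r := le_of_lt (lt_of_le_of_lt ht hrmem.1)
    have hrst : r ≤ s + t := by linarith [hrmem.2]
    have hxr : (0:ℝ) < 1 + lam * r ^ 2 := by nlinarith [sq_nonneg r]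
    have hgeq : g s - g t = g' r * (s - t) := by
      rw [eq_div_iff (sub_ne_zero.2 hlt.ne')] at hrslope
      exact hrslope.symm
    -- lower bound g' r
    have hb1 : (p - 1) * (1 + lam * r ^ 2) ^ ((p - 2) / 2) ≤ g' r := by
      have hfac : (p - 1) * (1 + lam * r ^ 2) ≤ 1 + (p - 1) * lam * r ^ 2 := by
        nlinarith [sq_nonneg r]
      have hpos : (0:ℝ) < (1 + lam * r ^ 2) ^ ((p - 2) / 2 - 1) := Real.rpow_pos_of_pos hxr _
      have hexp : (1 + lam * r ^ 2) ^ ((p - 2) / 2) =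
          (1 + lam * r ^ 2) ^ ((p - 2) / 2 - 1) * (1 + lam * r ^ 2) := by
        rw [← Real.rpow_add_one hxr.ne' ((p - 2) / 2 - 1)]; ring_nf
      rw [hg']
      calc (p - 1) * (1 + lam * r ^ 2) ^ ((p - 2) / 2)
          = (1 + lam * r ^ 2) ^ ((p - 2) / 2 - 1) * ((p - 1) * (1 + lam * r ^ 2)) := by
            rw [hexp]; ring
        _ ≤ (1 + lam * r ^ 2) ^ ((p - 2) / 2 - 1) * (1 + (p - 1) * lam * r ^ 2) :=
            mul_le_mul_of_nonneg_left hfac hpos.le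
    have hb2 := aux_F_lb p lam hp2 hlam r s t hs ht hr0 hrst
    have hst : 0 ≤ s - t := by linarith
    have : (p - 1) * ((max 1 lam) ^ ((p - 2) / 2) * (1 + s + t) ^ (p - 2)) ≤ g' r := by
      calc (p - 1) * ((max 1 lam) ^ ((p - 2) / 2) * (1 + s + t) ^ (p - 2))
          ≤ (p - 1) * (1 + lam * r ^ 2) ^ ((p - 2) / 2) := by
            apply mul_le_mul_of_nonneg_left hb2 (by linarith)
        _ ≤ g' r := hb1
    calc (p - 1) * (max 1 lam) ^ ((p - 2) / 2) * (1 + s + t) ^ (p - 2) * (s - t)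
        = (p - 1) * ((max 1 lam) ^ ((p - 2) / 2) * (1 + s + t) ^ (p - 2)) * (s - t) := by ring
      _ ≤ g' r * (s - t) := mul_le_mul_of_nonneg_right this hst
      _ = g s - g t := hgeq.symm

private lemma aux_core' (p lam : ℝ) (hp1 : 1 < p) (hp2 : p < 2) (hlam : 0 < lam)
    (s t c : ℝ) (hs : 0 ≤ s) (ht : 0 ≤ t) (hts : t ≤ s) (hc : c ≤ s * t) :
    (p - 1) * (max 1 lam) ^ ((p - 2) / 2) * (1 + s + t) ^ (p - 2) * (s ^ 2 + t ^ 2 - 2 * c) ≤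
      (1 + lam * s ^ 2) ^ ((p - 2) / 2) * s ^ 2 + (1 + lam * t ^ 2) ^ ((p - 2) / 2) * t ^ 2
        - ((1 + lam * s ^ 2) ^ ((p - 2) / 2) + (1 + lam * t ^ 2) ^ ((p - 2) / 2)) * c := by
  set Fs := (1 + lam * s ^ 2) ^ ((p - 2) / 2) with hFs
  set Ft := (1 + lam * t ^ 2) ^ ((p - 2) / 2) with hFt
  set w := (p - 1) * (max 1 lam) ^ ((p - 2) / 2) * (1 + s + t) ^ (p - 2) with hw
  have h1 : w * (s - t) ≤ s * Fs - t * Ft := aux_g_lb p lam hp1 hp2 hlam s t hs ht hts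
  have hc0 : (0:ℝ) < (max 1 lam) ^ ((p - 2) / 2) * (1 + s + t) ^ (p - 2) := by
    have : (0:ℝ) < max 1 lam := lt_of_lt_of_le one_pos (le_max_left _ _)
    have h1' := Real.rpow_pos_of_pos this ((p - 2) / 2)
    have h2' := Real.rpow_pos_of_pos (by linarith : (0:ℝ) < 1 + s + t) (p - 2)
    positivity
  have hwle : w ≤ (max 1 lam) ^ ((p - 2) / 2) * (1 + s + t) ^ (p - 2) := by
    rw [hw]
    nlinarith [hc0]
  have h2 : (max 1 lam) ^ ((p - 2) / 2) * (1 + s + t) ^ (p - 2) ≤ Fs := by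
    simpa using aux_F_lb p lam hp2 hlam s s t hs ht hs (by linarith)
  have h3 : (max 1 lam) ^ ((p - 2) / 2) * (1 + s + t) ^ (p - 2) ≤ Ft := by
    simpa using aux_F_lb p lam hp2 hlam t s t hs ht ht (by linarith)
  have hB : 2 * w ≤ Fs + Ft := by linarith
  have hst0 : 0 ≤ s - t := by linarith
  have hstc : 0 ≤ s * t - c := by linarith
  have P1 : (s - t) * (w * (s - t)) ≤ (s - t) * (s * Fs - t * Ft) :=
    mul_le_mul_of_nonneg_left h1 hst0
  have P2 : (s * t - c) * (2 * w) ≤ (s * t - c) * (Fs + Ft) :=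
    mul_le_mul_of_nonneg_left hB hstc
  nlinarith [P1, P2]

private lemma aux_core (p lam : ℝ) (hp1 : 1 < p) (hp2 : p < 2) (hlam : 0 < lam)
    (s t c : ℝ) (hs : 0 ≤ s) (ht : 0 ≤ t) (hc : c ≤ s * t) :
    (p - 1) * (max 1 lam) ^ ((p - 2) / 2) * (1 + s + t) ^ (p - 2) * (s ^ 2 + t ^ 2 - 2 * c) ≤
      (1 + lam * s ^ 2) ^ ((p - 2) / 2) * s ^ 2 + (1 + lam * t ^ 2) ^ ((p - 2) / 2) * t ^ 2
        - ((1 + lam * s ^ 2) ^ ((p - 2) / 2) + (1 + lam * t ^ 2) ^ ((p - 2) / 2)) * c := by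
  rcases le_total t s with h | h
  · exact aux_core' p lam hp1 hp2 hlam s t c hs ht h hc
  · have := aux_core' p lam hp1 hp2 hlam t s c ht hs h (by linarith [hc]; )
    have hcomm : (1:ℝ) + t + s = 1 + s + t := by ring
    rw [hcomm] at this
    linarith [this]

/-- Strong monotonicity estimate for the Carreau stress. -/
theorem carreau_strong_monotonicity (p η₀ ηinf lam : ℝ) (hp1 : 1 < p) (hp2 : p < 2)
    (hη : ηinf < η₀) (hηinf : 0 ≤ ηinf) (hlam : 0 < lam)
    (η : ℝ → ℝ) (hηdef : ∀ z, η z = ηinf + (η₀ - ηinf) * (1 + lam * z) ^ ((p - 2) / 2)) :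
    ∃ C₂ > 0, ∀ K L : Matrix (Fin 2) (Fin 2) ℝ, K.IsSymm → L.IsSymm →
      (ηinf + C₂ * (1 + frob K + frob L) ^ (p - 2)) * frob (K - L) ^ 2 ≤
        ∑ i, ∑ j, (η (frob K ^ 2) * K i j - η (frob L ^ 2) * L i j) * (K i j - L i j) := by
  have hμ : (0:ℝ) < η₀ - ηinf := by linarith
  have hMpos : (0:ℝ) < max 1 lam := lt_of_lt_of_le one_pos (le_max_left _ _)
  have hc₀ : (0:ℝ) < (max 1 lam) ^ ((p - 2) / 2) := Real.rpow_pos_of_pos hMpos _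
  refine ⟨(η₀ - ηinf) * ((p - 1) * (max 1 lam) ^ ((p - 2) / 2)), mul_pos hμ (mul_pos (by linarith) hc₀), ?_⟩
  intro K L _ _
  set s := frob K with hsdef
  set t := frob L with htdef
  have hs : 0 ≤ s := Real.sqrt_nonneg _
  have ht : 0 ≤ t := Real.sqrt_nonneg _
  have hs2 : s ^ 2 = ∑ i, ∑ j, K i j ^ 2 :=
    Real.sq_sqrt (by positivity)
  have ht2 : t ^ 2 = ∑ i, ∑ j, L i j ^ 2 :=
    Real.sq_sqrt (by positivity)
  set c := ∑ i, ∑ j, K i j * L i j with hcdef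
  have hcs : c ≤ s * t := by
    have hCS := Real.sum_mul_le_sqrt_mul_sqrt (Finset.univ : Finset (Fin 2 × Fin 2))
      (fun ij => K ij.1 ij.2) (fun ij => L ij.1 ij.2)
    simp only [Fintype.sum_prod_type] at hCS
    calc c ≤ Real.sqrt (∑ i, ∑ j, K i j ^ 2) * Real.sqrt (∑ i, ∑ j, L i j ^ 2) := hCS
      _ = s * t := rfl
  have hsub : frob (K - L) ^ 2 = s ^ 2 + t ^ 2 - 2 * c := by
    have h1 : frob (K - L) ^ 2 = ∑ i, ∑ j, (K i j - L i j) ^ 2 := by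
      rw [show frob (K - L) = Real.sqrt (∑ i, ∑ j, ((K - L) i j) ^ 2) from rfl]
      refine (Real.sq_sqrt (Finset.sum_nonneg fun i _ => Finset.sum_nonneg fun j _ => sq_nonneg _)).trans ?_
      simp [Matrix.sub_apply]
    rw [h1, hs2, ht2, hcdef]
    simp [Fin.sum_univ_two]
    ring
  have hRHS : (∑ i, ∑ j, (η (frob K ^ 2) * K i j - η (frob L ^ 2) * L i j) * (K i j - L i j))
      = η (s ^ 2) * s ^ 2 + η (t ^ 2) * t ^ 2 - (η (s ^ 2) + η (t ^ 2)) * c := by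
    rw [hs2, ht2, hcdef]
    simp only [Fin.sum_univ_two]
    ring
  rw [hRHS, hsub, hηdef, hηdef]
  have hcore := aux_core p lam hp1 hp2 hlam s t c hs ht hcs
  have hcore' := mul_le_mul_of_nonneg_left hcore hμ.le
  nlinarith [hcore']
end

section
/- The map B ↦ (1+|B|)^{p-2} B on symmetric d×d matrices is strictly monotone for p ∈ (1,2): for B₁ ≠ B₂, ((1+|B₁|)^{p-2}B₁ − (1+|B₂|)^{p-2}B₂) · (B₁ − B₂) > 0. -/
open Set RealInnerProductSpace

theorem strictMonoOn_mul_one_add_rpow {q : ℝ} (hq : -1 < q) :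
    StrictMonoOn (fun t : ℝ => t * (1 + t) ^ q) (Ici 0) := by
  intro s (hs : 0 ≤ s) t (ht : 0 ≤ t) hst
  have factor : ∀ u : ℝ, 0 ≤ u → u * (1 + u) ^ q = u / (1 + u) * (1 + u) ^ (q + 1) := by
    intro u hu
    rw [Real.rpow_add_one (by positivity)]
    field_simp
  simp only [factor s hs, factor t ht]
  calc s / (1 + s) * (1 + s) ^ (q + 1) ≤ t / (1 + t) * (1 + s) ^ (q + 1) := by
        refine mul_le_mul_of_nonneg_right ?_ (by positivity)
        rw [div_le_div_iff₀ (by positivity) (by positivity)]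
        linarith
    _ < t / (1 + t) * (1 + t) ^ (q + 1) := by
        have ht_pos : 0 < t := hs.trans_lt hst
        exact mul_lt_mul_of_pos_left
          (Real.rpow_lt_rpow (by positivity) (by linarith) (by linarith)) (by positivity)

theorem inner_smul_norm_sub_smul_norm_pos {E : Type*} [NormedAddCommGroup E]
    [InnerProductSpace ℝ E] {φ : ℝ → ℝ} (hφ : ∀ t, 0 ≤ t → 0 < φ t)
    (hmono : StrictMonoOn (fun t => t * φ t) (Ici 0)) {x y : E} (hxy : x ≠ y) :
    0 < ⟪φ ‖x‖ • x - φ ‖y‖ • y, x - y⟫ := by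
  rcases eq_or_ne ‖x‖ ‖y‖ with hnorm | hnorm
  · rw [hnorm, ← smul_sub, real_inner_smul_left, real_inner_self_eq_norm_sq]
    exact mul_pos (hφ _ (norm_nonneg y)) (pow_pos (norm_pos_iff.2 (sub_ne_zero.2 hxy)) 2)
  have hgap : 0 < (‖x‖ - ‖y‖) * (‖x‖ * φ ‖x‖ - ‖y‖ * φ ‖y‖) := by
    rcases hnorm.lt_or_gt with hlt | hlt
    · exact mul_pos_of_neg_of_neg (by linarith)
        (sub_neg.2 (hmono (norm_nonneg x) (norm_nonneg y) hlt))
    · exact mul_pos (by linarith) (sub_pos.2 (hmono (norm_nonneg y) (norm_nonneg x) hlt))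
  have hcs : (φ ‖x‖ + φ ‖y‖) * ⟪x, y⟫ ≤ (φ ‖x‖ + φ ‖y‖) * (‖x‖ * ‖y‖) :=
    mul_le_mul_of_nonneg_left (real_inner_le_norm x y)
      (add_nonneg (hφ _ (norm_nonneg x)).le (hφ _ (norm_nonneg y)).le)
  have hexpand : ⟪φ ‖x‖ • x - φ ‖y‖ • y, x - y⟫
      = φ ‖x‖ * ‖x‖ ^ 2 + φ ‖y‖ * ‖y‖ ^ 2 - (φ ‖x‖ + φ ‖y‖) * ⟪x, y⟫ := by
    simp only [inner_sub_left, inner_sub_right, real_inner_smul_left, real_inner_self_eq_norm_sq,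
      real_inner_comm x y]
    ring
  rw [hexpand]
  nlinarith

namespace Matrix

variable {n : ℕ}

def frobeniusVec (B : Matrix (Fin n) (Fin n) ℝ) : EuclideanSpace ℝ (Fin n × Fin n) :=
  WithLp.toLp 2 fun q => B q.1 q.2

theorem frobeniusVec_injective : Function.Injective (frobeniusVec (n := n)) := by
  intro A C h
  ext i j
  simpa [frobeniusVec] using congrArg (fun v => v (i, j)) h

theorem frob_eq_norm_frobeniusVec (B : Matrix (Fin n) (Fin n) ℝ) : frob B = ‖B.frobeniusVec‖ := by
  simp [frob, EuclideanSpace.norm_eq, frobeniusVec, Fintype.sum_prod_type]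

theorem inner_smul_frobeniusVec_sub (A C : Matrix (Fin n) (Fin n) ℝ) (a c : ℝ) :
    ⟪a • A.frobeniusVec - c • C.frobeniusVec, A.frobeniusVec - C.frobeniusVec⟫
      = ∑ i, ∑ j, (a * A i j - c * C i j) * (A i j - C i j) := by
  simp [frobeniusVec, PiLp.inner_apply, Fintype.sum_prod_type, mul_comm]

end Matrix

theorem carreau_strict_monotone_general {d : ℕ} (p : ℝ) (hp1 : 1 < p)
    (B₁ B₂ : Matrix (Fin d) (Fin d) ℝ) (hne : B₁ ≠ B₂) :
    0 < ∑ i, ∑ j,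
      ((1 + frob B₁) ^ (p - 2) * B₁ i j - (1 + frob B₂) ^ (p - 2) * B₂ i j) *
        (B₁ i j - B₂ i j) := by
  have hpos : ∀ t : ℝ, 0 ≤ t → 0 < (1 + t) ^ (p - 2) := fun t ht =>
    Real.rpow_pos_of_pos (by linarith) _
  have key := inner_smul_norm_sub_smul_norm_pos hpos
    (strictMonoOn_mul_one_add_rpow (by linarith)) (Matrix.frobeniusVec_injective.ne hne)
  simpa only [← Matrix.frob_eq_norm_frobeniusVec, Matrix.inner_smul_frobeniusVec_sub] using key

/-- The map `B ↦ (1+|B|)^{p-2} B` on symmetric matrices is strictly monotone for `p ∈ (1,2)`. -/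
theorem carreau_strict_monotone {d : ℕ} (p : ℝ) (hp1 : 1 < p) (hp2 : p < 2)
    (B₁ B₂ : Matrix (Fin d) (Fin d) ℝ) (h₁ : B₁.IsSymm) (h₂ : B₂.IsSymm) (hne : B₁ ≠ B₂) :
    0 < ∑ i, ∑ j,
      ((1 + frob B₁) ^ (p - 2) * B₁ i j - (1 + frob B₂) ^ (p - 2) * B₂ i j) *
        (B₁ i j - B₂ i j) :=
  carreau_strict_monotone_general p hp1 B₁ B₂ hne
end

section
/- Minty's trick: Let X be a real Banach space and A : X → X' be a monotone hemicontinuous operator, and let F ∈ X'. If u ∈ X satisfies ⟨A(v) − F, v − u⟩ ≥ 0 for all v ∈ X, then A(u) = F. -/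
/-!
Testing the variational inequality at `v = u + t • w` and dividing by `t > 0` gives
`⟨A (u + t • w) - F, w⟩ ≥ 0`; hemicontinuity lets `t → 0⁺`, so `⟨A u - F, w⟩ ≥ 0` for every `w`,
and applying this to `-w` as well forces `A u - F = 0`.
-/

open Set

section

variable {X : Type*} [AddCommGroup X] [Module ℝ X] [TopologicalSpace X]

theorem ContinuousLinearMap.eq_zero_of_forall_nonneg {f : X →L[ℝ] ℝ} (hf : ∀ w, 0 ≤ f w) :
    f = 0 := by
  ext w
  have := hf (-w)
  rw [map_neg] at this
  exact le_antisymm (neg_nonneg.mp this) (hf w)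

theorem apply_sub_nonneg_of_variational_ineq {A : X → X →L[ℝ] ℝ} {F : X →L[ℝ] ℝ} {u : X}
    (hu : ∀ v, 0 ≤ (A v - F) (v - u)) (w : X) {t : ℝ} (ht : 0 < t) :
    0 ≤ (A (u + t • w) - F) w := by
  have h := hu (u + t • w)
  rw [add_sub_cancel_left, map_smul, smul_eq_mul] at h
  exact nonneg_of_mul_nonneg_right h ht

end

theorem nonneg_of_continuousWithinAt_of_forall_pos {g : ℝ → ℝ}
    (hg : ContinuousWithinAt g (Ioi 0) 0) (h : ∀ t ∈ Ioi (0 : ℝ), 0 ≤ g t) : 0 ≤ g 0 :=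
  continuousWithinAt_const.closure_le (by simp) hg h

theorem minty_trick_general {X : Type*} [NormedAddCommGroup X] [NormedSpace ℝ X]
    (A : X → (X →L[ℝ] ℝ)) (F : X →L[ℝ] ℝ)
    (hhemi : ∀ u w v : X, Continuous fun lam : ℝ => (A (u + lam • w)) v)
    (u : X) (hu : ∀ v : X, 0 ≤ (A v - F) (v - u)) :
    A u = F := by
  refine sub_eq_zero.mp (ContinuousLinearMap.eq_zero_of_forall_nonneg fun w => ?_)
  have hcont : Continuous fun t : ℝ => (A (u + t • w) - F) w :=
    (hhemi u w w).sub continuous_const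
  simpa using nonneg_of_continuousWithinAt_of_forall_pos hcont.continuousWithinAt
    fun t ht => apply_sub_nonneg_of_variational_ineq hu w ht

/-- Minty's trick: if `A : X → X'` is monotone and hemicontinuous on a real Banach space `X`,
`F ∈ X'` and `⟨A(v) − F, v − u⟩ ≥ 0` for all `v`, then `A(u) = F`. -/
theorem minty_trick {X : Type*} [NormedAddCommGroup X] [NormedSpace ℝ X] [CompleteSpace X]
    (A : X → (X →L[ℝ] ℝ)) (F : X →L[ℝ] ℝ)
    (hmono : ∀ x y : X, 0 ≤ (A x - A y) (x - y))
    (hhemi : ∀ u w v : X, Continuous fun lam : ℝ => (A (u + lam • w)) v)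
    (u : X) (hu : ∀ v : X, 0 ≤ (A v - F) (v - u)) :
    A u = F :=
  minty_trick_general A F hhemi u hu
end
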